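/- arXiv:1706.07027 — 4 statements merged into one kernel-verified Lean document; each statement's English description precedes it below -/
import Mathlib

section
/- Let η : [0,1] → A be continuous and let g : [0,1] → A be a based gauge transformation, i.e. a C¹ map with g(θ) invertible for every θ and g(0) = 1. Then the horizontal path of the gauge-transformed connection (g·η)(θ) := g(θ)⁻¹ η(θ) g(θ) + g(θ)⁻¹ g'(θ) is given by Ψ_{g·η}(θ) = g(θ)⁻¹ · Ψ_η(θ) for all θ ∈ [0,1]. -/
/-!
By the Leibniz rule `φ = g * Ψ'` satisfies `φ' = g' Ψ' - g (g⁻¹ η g + g⁻¹ g') Ψ' = -η φ`: the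
gauge term cancels the derivative of `g`. Since `g 0 = 1`, `φ` and `Ψ` solve the same linear
ODE with the same initial value, and its coefficient `η` is bounded on the compact interval,
so Grönwall uniqueness gives `g * Ψ' = Ψ`.
-/

open Set

section

variable {A : Type*} [NormedRing A] [NormedAlgebra ℝ A]

theorem eqOn_Icc_of_hasDerivWithinAt_neg_mul {η f₁ f₂ : ℝ → A} {a b : ℝ}
    (hη : ContinuousOn η (Icc a b))
    (hf₁ : ∀ t ∈ Icc a b, HasDerivWithinAt f₁ (-(η t * f₁ t)) (Icc a b) t)
    (hf₂ : ∀ t ∈ Icc a b, HasDerivWithinAt f₂ (-(η t * f₂ t)) (Icc a b) t)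
    (ha : f₁ a = f₂ a) : EqOn f₁ f₂ (Icc a b) := by
  obtain ⟨C, hC⟩ := isCompact_Icc.exists_bound_of_continuousOn hη
  have hlip : ∀ t ∈ Ico a b, LipschitzOnWith C.toNNReal (fun x => -(η t * x)) univ := by
    refine fun t ht => lipschitzOnWith_iff_norm_sub_le.2 fun x _ y _ => ?_
    calc ‖-(η t * x) - -(η t * y)‖
        = ‖η t * (x - y)‖ := by rw [neg_sub_neg, ← mul_sub, ← norm_neg, ← mul_neg, neg_sub]
      _ ≤ ‖η t‖ * ‖x - y‖ := norm_mul_le _ _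
      _ ≤ C.toNNReal * ‖x - y‖ := by
        gcongr
        exact (hC t (Ico_subset_Icc_self ht)).trans (Real.le_coe_toNNReal C)
  have hright : ∀ f : ℝ → A, (∀ t ∈ Icc a b, HasDerivWithinAt f (-(η t * f t)) (Icc a b) t) →
      ∀ t ∈ Ico a b, HasDerivWithinAt f (-(η t * f t)) (Ici t) t := fun f hf t ht =>
    (hf t (Ico_subset_Icc_self ht)).mono_of_mem_nhdsWithin (Icc_mem_nhdsGE_of_mem ht)
  exact ODE_solution_unique_of_mem_Icc_right hlip
    (fun t ht => (hf₁ t ht).continuousWithinAt) (hright f₁ hf₁) (fun _ _ => mem_univ _)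
    (fun t ht => (hf₂ t ht).continuousWithinAt) (hright f₂ hf₂) (fun _ _ => mem_univ _) ha

theorem HasDerivWithinAt.mul_of_gauge {g ψ : ℝ → A} {dg a : A} {s : Set ℝ} {t : ℝ}
    (hg : HasDerivWithinAt g dg s t) (hunit : IsUnit (g t))
    (hψ : HasDerivWithinAt ψ
      (-((Ring.inverse (g t) * a * g t + Ring.inverse (g t) * dg) * ψ t)) s t) :
    HasDerivWithinAt (fun θ => g θ * ψ θ) (-(a * (g t * ψ t))) s t := by
  refine (hg.mul hψ).congr_deriv ?_
  have hcancel : g t * Ring.inverse (g t) = 1 := Ring.mul_inverse_cancel _ hunit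
  simp only [mul_neg, mul_add, add_mul, ← mul_assoc, hcancel, one_mul]
  abel

end

theorem stmt_2_general {A : Type*} [NormedRing A] [NormedAlgebra ℝ A]
    (η Ψ g Dg Ψ' : ℝ → A) (hη : ContinuousOn η (Icc 0 1))
    -- Ψ is the horizontal path of η
    (hΨ : ∀ θ ∈ Icc (0:ℝ) 1, HasDerivWithinAt Ψ (-(η θ * Ψ θ)) (Icc (0:ℝ) 1) θ)
    (hΨ0 : Ψ 0 = 1)
    -- g is a based gauge transformation with derivative Dg
    (hg : ∀ θ ∈ Icc (0:ℝ) 1, HasDerivWithinAt g (Dg θ) (Icc (0:ℝ) 1) θ)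
    (hginv : ∀ θ ∈ Icc (0:ℝ) 1, IsUnit (g θ))
    (hg0 : g 0 = 1)
    -- Ψ' is the horizontal path of the gauge-transformed connection g·η
    (hΨ' : ∀ θ ∈ Icc (0:ℝ) 1, HasDerivWithinAt Ψ'
      (-((Ring.inverse (g θ) * η θ * g θ + Ring.inverse (g θ) * Dg θ) * Ψ' θ))
      (Icc (0:ℝ) 1) θ)
    (hΨ'0 : Ψ' 0 = 1) :
    ∀ θ ∈ Icc (0:ℝ) 1, Ψ' θ = Ring.inverse (g θ) * Ψ θ := by
  have hgΨ' : EqOn (fun θ => g θ * Ψ' θ) Ψ (Icc 0 1) :=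
    eqOn_Icc_of_hasDerivWithinAt_neg_mul hη
      (fun θ hθ => (hg θ hθ).mul_of_gauge (hginv θ hθ) (hΨ' θ hθ)) hΨ
      (by simp [hg0, hΨ'0, hΨ0])
  intro θ hθ
  rw [← hgΨ' hθ, ← mul_assoc, Ring.inverse_mul_cancel _ (hginv θ hθ), one_mul]

/-- If `g : [0,1] → A` is a based gauge transformation (C¹, pointwise invertible,
`g(0) = 1`), then the horizontal path of the gauge-transformed connection
`(g·η)(θ) = g(θ)⁻¹ η(θ) g(θ) + g(θ)⁻¹ g'(θ)` is `θ ↦ g(θ)⁻¹ · Ψ_η(θ)`. -/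
theorem stmt_2 {A : Type*} [NormedRing A] [NormedAlgebra ℝ A] [NormOneClass A]
    [CompleteSpace A] (η Ψ g Dg Ψ' : ℝ → A) (hη : ContinuousOn η (Icc 0 1))
    -- Ψ is the horizontal path of η
    (hΨ : ∀ θ ∈ Icc (0:ℝ) 1, HasDerivWithinAt Ψ (-(η θ * Ψ θ)) (Icc (0:ℝ) 1) θ)
    (hΨ0 : Ψ 0 = 1)
    -- g is a based gauge transformation with derivative Dg
    (hg : ∀ θ ∈ Icc (0:ℝ) 1, HasDerivWithinAt g (Dg θ) (Icc (0:ℝ) 1) θ)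
    (hDg : ContinuousOn Dg (Icc 0 1))
    (hginv : ∀ θ ∈ Icc (0:ℝ) 1, IsUnit (g θ))
    (hg0 : g 0 = 1)
    -- Ψ' is the horizontal path of the gauge-transformed connection g·η
    (hΨ' : ∀ θ ∈ Icc (0:ℝ) 1, HasDerivWithinAt Ψ'
      (-((Ring.inverse (g θ) * η θ * g θ + Ring.inverse (g θ) * Dg θ) * Ψ' θ))
      (Icc (0:ℝ) 1) θ)
    (hΨ'0 : Ψ' 0 = 1) :
    ∀ θ ∈ Icc (0:ℝ) 1, Ψ' θ = Ring.inverse (g θ) * Ψ θ :=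
  stmt_2_general η Ψ g Dg Ψ' hη hΨ hΨ0 hg hginv hg0 hΨ' hΨ'0
end

section
/- Let η : [0,1] → A be continuous and let g : [0,1] → A be a based gauge transformation that is moreover a loop, i.e. g is C¹ with g(θ) invertible for every θ and g(0) = g(1) = 1. Then the holonomy is invariant under the gauge action: Hol_{g·η} = Hol_η, where (g·η)(θ) := g(θ)⁻¹ η(θ) g(θ) + g(θ)⁻¹ g'(θ). -/
/-!
Write `Φ := g⁻¹ Ψ`. Differentiating, `Φ' = -g⁻¹ g' g⁻¹ Ψ - g⁻¹ η Ψ = -(g⁻¹ η g + g⁻¹ g') Φ`, so `Φ`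
is a horizontal path of `g·η`, and `Φ 0 = 1` because `g 0 = 1`. Linear ODEs with continuous
coefficients have unique solutions, hence `Ψ_{g·η} = Φ`, and evaluating at `1`, where `g 1 = 1`,
gives `Hol_{g·η} = Ψ 1 = Hol_η`.
-/

open Set

theorem lipschitzWith_mul_left_of_norm_le {A : Type*} [NonUnitalSeminormedRing A] {a : A}
    {C : NNReal} (ha : ‖a‖ ≤ C) : LipschitzWith C (a * ·) :=
  LipschitzWith.of_dist_le_mul fun x y => by
    rw [dist_eq_norm, dist_eq_norm, ← mul_sub]
    exact (norm_mul_le _ _).trans (by gcongr)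

theorem eqOn_Icc_of_hasDerivWithinAt_mul {A : Type*} [NormedRing A] [NormedSpace ℝ A]
    {B f h : ℝ → A} {a b : ℝ} (hB : ContinuousOn B (Icc a b))
    (hf : ∀ t ∈ Icc a b, HasDerivWithinAt f (B t * f t) (Icc a b) t)
    (hh : ∀ t ∈ Icc a b, HasDerivWithinAt h (B t * h t) (Icc a b) t)
    (ha : f a = h a) : EqOn f h (Icc a b) := by
  obtain ⟨C, hC⟩ := isCompact_Icc.exists_bound_of_continuousOn hB
  have right_deriv : ∀ F : ℝ → A, (∀ t ∈ Icc a b, HasDerivWithinAt F (B t * F t) (Icc a b) t) →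
      ∀ t ∈ Ico a b, HasDerivWithinAt F (B t * F t) (Ici t) t := fun F hF t ht =>
    (hF t (Ico_subset_Icc_self ht)).mono_of_mem_nhdsWithin (Icc_mem_nhdsGE_of_mem ht)
  exact ODE_solution_unique_of_mem_Icc_right (v := fun t x => B t * x) (s := fun _ => univ)
    (fun t ht => (lipschitzWith_mul_left_of_norm_le
      ((hC t (Ico_subset_Icc_self ht)).trans (Real.le_coe_toNNReal C))).lipschitzOnWith)
    (fun t ht => (hf t ht).continuousWithinAt) (right_deriv f hf) (fun _ _ => trivial)
    (fun t ht => (hh t ht).continuousWithinAt) (right_deriv h hh) (fun _ _ => trivial) ha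

theorem HasDerivWithinAt.ringInverse {𝕜 A : Type*} [NontriviallyNormedField 𝕜] [NormedRing A]
    [NormedAlgebra 𝕜 A] [CompleteSpace A] {g : 𝕜 → A} {g' : A} {s : Set 𝕜} {x : 𝕜}
    (hg : HasDerivWithinAt g g' s x) (hx : IsUnit (g x)) :
    HasDerivWithinAt (fun t => Ring.inverse (g t))
      (-(Ring.inverse (g x) * g' * Ring.inverse (g x))) s x := by
  obtain ⟨u, hu⟩ := hx
  have := (hu ▸ hasFDerivAt_ringInverse (𝕜 := 𝕜) u).comp_hasDerivWithinAt x hg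
  simpa [Function.comp_def, ← hu, Ring.inverse_unit] using this

section Gauge

variable {A : Type*} [NormedRing A]

/-- The gauge transform `g·η`, with `Dg` standing for the derivative `g'`. -/
noncomputable def gaugeAct (g Dg η : ℝ → A) (θ : ℝ) : A :=
  Ring.inverse (g θ) * η θ * g θ + Ring.inverse (g θ) * Dg θ

theorem ContinuousOn.gaugeAct {g Dg η : ℝ → A} {s : Set ℝ} (hg : ContinuousOn g s)
    (hginv : ContinuousOn (fun θ => Ring.inverse (g θ)) s) (hDg : ContinuousOn Dg s)
    (hη : ContinuousOn η s) : ContinuousOn (gaugeAct g Dg η) s :=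
  ((hginv.mul hη).mul hg).add (hginv.mul hDg)

theorem HasDerivWithinAt.ringInverse_mul_horizontal [NormedAlgebra ℝ A] [CompleteSpace A] {g Dg η Ψ : ℝ → A} {s : Set ℝ} {θ : ℝ}
    (hg : HasDerivWithinAt g (Dg θ) s θ) (hgθ : IsUnit (g θ))
    (hΨ : HasDerivWithinAt Ψ (-(η θ * Ψ θ)) s θ) :
    HasDerivWithinAt (fun t => Ring.inverse (g t) * Ψ t)
      (-(gaugeAct g Dg η θ * (Ring.inverse (g θ) * Ψ θ))) s θ := by
  convert (hg.ringInverse hgθ).mul hΨ using 1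
  · rfl
  have hcancel : g θ * (Ring.inverse (g θ) * Ψ θ) = Ψ θ := by
    rw [← mul_assoc, Ring.mul_inverse_cancel _ hgθ, one_mul]
  simp only [gaugeAct, add_mul, mul_assoc, hcancel, mul_neg, neg_mul, neg_add]
  abel

end Gauge

theorem stmt_3_general {A : Type*} [NormedRing A] [NormedAlgebra ℝ A]
    [CompleteSpace A] (η Ψ g Dg Ψ' : ℝ → A) (hη : ContinuousOn η (Icc 0 1))
    -- Ψ is the horizontal path of η, so that Hol_η = Ψ 1
    (hΨ : ∀ θ ∈ Icc (0:ℝ) 1, HasDerivWithinAt Ψ (-(η θ * Ψ θ)) (Icc (0:ℝ) 1) θ)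
    (hΨ0 : Ψ 0 = 1)
    -- g is a based loop of gauge transformations with derivative Dg
    (hg : ∀ θ ∈ Icc (0:ℝ) 1, HasDerivWithinAt g (Dg θ) (Icc (0:ℝ) 1) θ)
    (hDg : ContinuousOn Dg (Icc 0 1))
    (hginv : ∀ θ ∈ Icc (0:ℝ) 1, IsUnit (g θ))
    (hg0 : g 0 = 1) (hg1 : g 1 = 1)
    -- Ψ' is the horizontal path of the gauge-transformed connection g·η, so Hol_{g·η} = Ψ' 1
    (hΨ' : ∀ θ ∈ Icc (0:ℝ) 1, HasDerivWithinAt Ψ'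
      (-((Ring.inverse (g θ) * η θ * g θ + Ring.inverse (g θ) * Dg θ) * Ψ' θ))
      (Icc (0:ℝ) 1) θ)
    (hΨ'0 : Ψ' 0 = 1) :
    Ψ' 1 = Ψ 1 := by
  have hgcont : ContinuousOn g (Icc 0 1) := fun θ hθ => (hg θ hθ).continuousWithinAt
  have hginvcont : ContinuousOn (fun θ => Ring.inverse (g θ)) (Icc 0 1) := fun θ hθ =>
    ((hg θ hθ).ringInverse (hginv θ hθ)).continuousWithinAt
  have hcoeff : ContinuousOn (fun θ => -gaugeAct g Dg η θ) (Icc 0 1) :=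
    (hgcont.gaugeAct hginvcont hDg hη).neg
  have hunique := eqOn_Icc_of_hasDerivWithinAt_mul hcoeff
    (fun θ hθ => by simpa only [neg_mul, gaugeAct] using hΨ' θ hθ)
    (fun θ hθ => by
      simpa only [neg_mul] using (hg θ hθ).ringInverse_mul_horizontal (hginv θ hθ) (hΨ θ hθ))
    (by simp [hΨ'0, hΨ0, hg0]) (right_mem_Icc.2 zero_le_one)
  simpa [hg1] using hunique

/-- The holonomy is invariant under based loops of gauge transformations: if `g` is C¹,
pointwise invertible and `g(0) = g(1) = 1`, then `Hol_{g·η} = Hol_η`. -/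
theorem stmt_3 {A : Type*} [NormedRing A] [NormedAlgebra ℝ A] [NormOneClass A]
    [CompleteSpace A] (η Ψ g Dg Ψ' : ℝ → A) (hη : ContinuousOn η (Icc 0 1))
    -- Ψ is the horizontal path of η, so that Hol_η = Ψ 1
    (hΨ : ∀ θ ∈ Icc (0:ℝ) 1, HasDerivWithinAt Ψ (-(η θ * Ψ θ)) (Icc (0:ℝ) 1) θ)
    (hΨ0 : Ψ 0 = 1)
    -- g is a based loop of gauge transformations with derivative Dg
    (hg : ∀ θ ∈ Icc (0:ℝ) 1, HasDerivWithinAt g (Dg θ) (Icc (0:ℝ) 1) θ)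
    (hDg : ContinuousOn Dg (Icc 0 1))
    (hginv : ∀ θ ∈ Icc (0:ℝ) 1, IsUnit (g θ))
    (hg0 : g 0 = 1) (hg1 : g 1 = 1)
    -- Ψ' is the horizontal path of the gauge-transformed connection g·η, so Hol_{g·η} = Ψ' 1
    (hΨ' : ∀ θ ∈ Icc (0:ℝ) 1, HasDerivWithinAt Ψ'
      (-((Ring.inverse (g θ) * η θ * g θ + Ring.inverse (g θ) * Dg θ) * Ψ' θ))
      (Icc (0:ℝ) 1) θ)
    (hΨ'0 : Ψ' 0 = 1) :
    Ψ' 1 = Ψ 1 :=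
  stmt_3_general η Ψ g Dg Ψ' hη hΨ hΨ0 hg hDg hginv hg0 hg1 hΨ' hΨ'0
end

section
/- Let η : [0,1] → A be continuous and suppose L ∈ A satisfies exp(L) = Hol_η. Define h : [0,1] → A by h(θ) := Ψ_η(θ)·exp(−θL). Then: (i) h(θ) is invertible for every θ; (ii) h(0) = 1 and h(1) = 1, so h is a based loop of gauge transformations; and (iii) h transforms η into the constant connection −L, i.e. h(θ)⁻¹ η(θ) h(θ) + h(θ)⁻¹ h'(θ) = −L for all θ ∈ [0,1]. -/
/-!
The one substantial point is that the horizontal path `Ψ` takes invertible values. If `Ψ a` is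
invertible, then `t ↦ Ψ t * (Ψ a)⁻¹` solves the same linear equation with initial value `1`, so by
Grönwall `‖Ψ t * (Ψ a)⁻¹ - 1‖ ≤ exp (M (t - a)) - 1 < 1` as long as `M (t - a) < log 2`, where `M`
bounds `‖η‖`; a Neumann series then inverts `Ψ t`. This step length is uniform, so finitely many
steps cover `[0, 1]`. The rest is computation: `h' = -η h - h L` by the product rule, whence
`h⁻¹ η h + h⁻¹ h' = -L`, and `h 1 = exp L * exp (-L) = 1`.
-/

open Set

theorem gronwallBound_zero_self (K x : ℝ) : gronwallBound 0 K K x = Real.exp (K * x) - 1 := by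
  rcases eq_or_ne K 0 with rfl | hK
  · simp [gronwallBound_K0]
  · simp [gronwallBound_of_K_ne_0 hK, div_self hK]

theorem Icc_subset_of_forall_mem_of_le_add {s : Set ℝ} {a b δ : ℝ} (hδ : 0 < δ) (ha : a ∈ s)
    (hstep : ∀ x ∈ s ∩ Icc a b, ∀ y ∈ Icc a b, x ≤ y → y ≤ x + δ → y ∈ s) :
    Icc a b ⊆ s := by
  have hn : ∀ n : ℕ, ∀ y ∈ Icc a b, y ≤ a + n * δ → y ∈ s := by
    intro n
    induction n with
    | zero =>
      intro y hy hya
      rwa [le_antisymm (by simpa using hya) hy.1]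
    | succ n ih =>
      intro y hy hyn
      by_cases hle : y ≤ a + n * δ
      · exact ih y hy hle
      have hx : a + n * δ ∈ Icc a b := ⟨le_add_of_nonneg_right (by positivity), by linarith [hy.2]⟩
      exact hstep _ ⟨ih _ hx le_rfl, hx⟩ y hy (by linarith) (by push_cast at hyn; linarith)
  obtain ⟨n, hn'⟩ := exists_nat_ge ((b - a) / δ)
  intro y hy
  refine hn n y hy ?_
  rw [div_le_iff₀ hδ] at hn'
  linarith [hy.2]

section LinearODE

variable {A : Type*} [NormedRing A] [NormedAlgebra ℝ A]

theorem norm_sub_one_le_exp_sub_one_of_hasDerivWithinAt [NormOneClass A] {η f : ℝ → A}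
    {a b M : ℝ} (hf : ∀ t ∈ Icc a b, HasDerivWithinAt f (-(η t * f t)) (Icc a b) t)
    (hfa : f a = 1) (hη : ∀ t ∈ Icc a b, ‖η t‖ ≤ M) :
    ∀ t ∈ Icc a b, ‖f t - 1‖ ≤ Real.exp (M * (t - a)) - 1 := by
  have hderiv : ∀ t ∈ Ico a b, HasDerivWithinAt (fun t => f t - 1) (-(η t * f t)) (Ici t) t :=
    fun t ht => ((hf t (Ico_subset_Icc_self ht)).mono_of_mem_nhdsWithin
      (Icc_mem_nhdsGE_of_mem ht)).sub_const 1
  have hcont : ContinuousOn (fun t => f t - 1) (Icc a b) :=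
    fun t ht => (hf t ht).continuousWithinAt.sub continuousWithinAt_const
  have hbound : ∀ t ∈ Ico a b, ‖-(η t * f t)‖ ≤ M * ‖f t - 1‖ + M := by
    intro t ht
    have hM : 0 ≤ M := (norm_nonneg _).trans (hη t (Ico_subset_Icc_self ht))
    calc ‖-(η t * f t)‖ ≤ ‖η t‖ * ‖f t - 1 + 1‖ := by
          rw [norm_neg, sub_add_cancel]; exact norm_mul_le _ _
      _ ≤ M * (‖f t - 1‖ + 1) := by
        gcongr
        · exact hη t (Ico_subset_Icc_self ht)
        · exact (norm_add_le _ _).trans_eq (by rw [norm_one])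
      _ = M * ‖f t - 1‖ + M := by ring
  intro t ht
  rw [← gronwallBound_zero_self]
  exact norm_le_gronwallBound_of_norm_deriv_right_le hcont hderiv
    (by rw [hfa, sub_self, norm_zero]) hbound t ht

theorem isUnit_of_hasDerivWithinAt_of_mul_lt_log_two [NormOneClass A] [CompleteSpace A]
    {η Ψ : ℝ → A} {a b M : ℝ}
    (hΨ : ∀ t ∈ Icc a b, HasDerivWithinAt Ψ (-(η t * Ψ t)) (Icc a b) t)
    (hη : ∀ t ∈ Icc a b, ‖η t‖ ≤ M) (ha : IsUnit (Ψ a)) {t : ℝ} (ht : t ∈ Icc a b)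
    (hMt : M * (t - a) < Real.log 2) : IsUnit (Ψ t) := by
  obtain ⟨u, hu⟩ := ha
  set f : ℝ → A := fun t => Ψ t * ↑u⁻¹
  have hf : ∀ t ∈ Icc a b, HasDerivWithinAt f (-(η t * f t)) (Icc a b) t := by
    intro t ht
    simpa only [f, neg_mul, mul_assoc] using (hΨ t ht).mul_const (↑u⁻¹ : A)
  have hclose : ‖f t - 1‖ < 1 := by
    have hexp : Real.exp (M * (t - a)) < 2 := by
      simpa [Real.exp_log] using Real.exp_lt_exp.2 hMt
    have := norm_sub_one_le_exp_sub_one_of_hasDerivWithinAt hf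
      (by simp [f, ← hu]) hη t ht
    linarith
  have hft : IsUnit (f t) := by
    simpa using isUnit_one_sub_of_norm_lt_one (x := 1 - f t) (by rwa [norm_sub_rev])
  simpa [f, mul_assoc] using hft.mul u.isUnit

theorem isUnit_of_hasDerivWithinAt_neg_mul [NormOneClass A] [CompleteSpace A] {η Ψ : ℝ → A}
    {a b : ℝ} (hη : ContinuousOn η (Icc a b))
    (hΨ : ∀ t ∈ Icc a b, HasDerivWithinAt Ψ (-(η t * Ψ t)) (Icc a b) t) (ha : IsUnit (Ψ a)) :
    ∀ t ∈ Icc a b, IsUnit (Ψ t) := by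
  obtain ⟨M, hM⟩ := isCompact_Icc.exists_bound_of_continuousOn hη
  set M' := max M 0
  have hM' : 0 ≤ M' := le_max_right M 0
  have hη' : ∀ t ∈ Icc a b, ‖η t‖ ≤ M' := fun t ht => (hM t ht).trans (le_max_left _ _)
  have hδ : 0 < Real.log 2 / (M' + 1) := by positivity
  refine Icc_subset_of_forall_mem_of_le_add hδ ha fun x hx y hy hxy hyx => ?_
  have hsub : Icc x b ⊆ Icc a b := Icc_subset_Icc_left hx.2.1
  refine isUnit_of_hasDerivWithinAt_of_mul_lt_log_two
    (fun t ht => (hΨ t (hsub ht)).mono hsub) (fun t ht => hη' t (hsub ht)) hx.1 ⟨hxy, hy.2⟩ ?_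
  calc M' * (y - x) ≤ M' * (Real.log 2 / (M' + 1)) := by gcongr; linarith
    _ < Real.log 2 := by
      rw [mul_div_assoc', div_lt_iff₀ (by linarith)]
      nlinarith [Real.log_pos one_lt_two]

end LinearODE

theorem Ring.inverse_mul_mul_add_inverse_mul_eq_neg {R : Type*} [Ring R] {g x y : R}
    (hg : IsUnit g) : Ring.inverse g * x * g + Ring.inverse g * (-(x * g) - g * y) = -y := by
  have key : Ring.inverse g * x * g + Ring.inverse g * (-(x * g) - g * y) =
      -(Ring.inverse g * g * y) := by noncomm_ring
  rw [key, Ring.inverse_mul_cancel g hg, one_mul]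

section Gauge

variable {A : Type*} [NormedRing A] [NormedAlgebra ℝ A] [CompleteSpace A]

theorem HasDerivWithinAt.mul_exp_neg_smul {η Ψ : ℝ → A} {L : A} {s : Set ℝ} {θ : ℝ}
    (hΨ : HasDerivWithinAt Ψ (-(η θ * Ψ θ)) s θ) :
    HasDerivWithinAt (fun θ => Ψ θ * NormedSpace.exp (-(θ • L)))
      (-(η θ * (Ψ θ * NormedSpace.exp (-(θ • L)))) - Ψ θ * NormedSpace.exp (-(θ • L)) * L)
      s θ := by
  have hexp := (hasDerivAt_exp_smul_const (-L) θ).hasDerivWithinAt (s := s)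
  simp only [smul_neg] at hexp ⊢
  refine (hΨ.mul hexp).congr_deriv ?_
  noncomm_ring

theorem NormedSpace.exp_mul_exp_neg (L : A) : NormedSpace.exp L * NormedSpace.exp (-L) = 1 := by
  let : NormedAlgebra ℚ A := .restrictScalars ℚ ℝ A
  rw [← NormedSpace.exp_add_of_commute (Commute.refl L).neg_right, add_neg_cancel,
    NormedSpace.exp_zero]

end Gauge

/-- If `exp(L) = Hol_η`, then `h(θ) := Ψ_η(θ)·exp(-θL)` is a based loop of gauge
transformations which transforms `η` into the constant connection `-L`. -/
theorem stmt_4 {A : Type*} [NormedRing A] [NormedAlgebra ℝ A] [NormOneClass A]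
    [CompleteSpace A] (η Ψ : ℝ → A) (L : A) (hη : ContinuousOn η (Icc 0 1))
    -- Ψ is the horizontal path of η, so that Hol_η = Ψ 1
    (hΨ : ∀ θ ∈ Icc (0:ℝ) 1, HasDerivWithinAt Ψ (-(η θ * Ψ θ)) (Icc (0:ℝ) 1) θ)
    (hΨ0 : Ψ 0 = 1)
    (hL : NormedSpace.exp L = Ψ 1)
    (h : ℝ → A) (hdef : ∀ θ, h θ = Ψ θ * NormedSpace.exp (-(θ • L))) :
    (∀ θ ∈ Icc (0:ℝ) 1, IsUnit (h θ)) ∧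
    h 0 = 1 ∧ h 1 = 1 ∧
    (∃ Dh : ℝ → A,
      (∀ θ ∈ Icc (0:ℝ) 1, HasDerivWithinAt h (Dh θ) (Icc (0:ℝ) 1) θ) ∧
      (∀ θ ∈ Icc (0:ℝ) 1,
        Ring.inverse (h θ) * η θ * h θ + Ring.inverse (h θ) * Dh θ = -L)) := by
  have hΨu := isUnit_of_hasDerivWithinAt_neg_mul hη hΨ (hΨ0 ▸ isUnit_one)
  have hu : ∀ θ ∈ Icc (0:ℝ) 1, IsUnit (h θ) := fun θ hθ => by
    let : NormedAlgebra ℚ A := .restrictScalars ℚ ℝ A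
    rw [hdef]
    exact (hΨu θ hθ).mul (NormedSpace.isUnit_exp _)
  have hfun : h = fun θ => Ψ θ * NormedSpace.exp (-(θ • L)) := funext hdef
  refine ⟨hu, ?_, ?_, fun θ => -(η θ * h θ) - h θ * L, fun θ hθ => ?_, fun θ hθ =>
    Ring.inverse_mul_mul_add_inverse_mul_eq_neg (hu θ hθ)⟩
  · rw [hdef, zero_smul, neg_zero, NormedSpace.exp_zero, hΨ0, one_mul]
  · rw [hdef, one_smul, ← hL, NormedSpace.exp_mul_exp_neg]
  · rw [hfun]
    exact (hΨ θ hθ).mul_exp_neg_smul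
end

section
/- Suppose ζ, ξ : ℝ → V are C¹ and 2π-periodic and satisfy, for all θ ∈ ℝ, the two equations ζ'(θ) + [η₀, ζ(θ)] + ξ(θ) = 0 and ξ'(θ) + [η₀, ξ(θ)] + Q(θ)(ζ(θ)) = 0. Then ζ ≡ 0 and ξ ≡ 0. -/
open Real
open scoped RealInnerProductSpace

/-- Vanishing of the group directions in the kernel of the linearized critical-loop
operator intersected with the gauge slice: if `[η₀,·]` is skew-adjoint, `Q` is a continuous
`2π`-periodic family of symmetric positive-definite operators, and the `2π`-periodic C¹
maps `ζ, ξ` satisfy `ζ' + [η₀,ζ] + ξ = 0` and `ξ' + [η₀,ξ] + Q(ζ) = 0`, then `ζ ≡ 0` and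
`ξ ≡ 0`. -/
theorem stmt_11 {V : Type*} [NormedAddCommGroup V] [InnerProductSpace ℝ V]
    [FiniteDimensional ℝ V]
    (B : V →ₗ[ℝ] V →ₗ[ℝ] V) (η₀ : V)
    (hskew : ∀ a b : V, ⟪B η₀ a, b⟫ + ⟪a, B η₀ b⟫ = 0)
    (Q : ℝ → V →L[ℝ] V) (hQcont : Continuous Q)
    (hQper : ∀ θ : ℝ, Q (θ + 2 * π) = Q θ)
    (hQsymm : ∀ (θ : ℝ) (a b : V), ⟪Q θ a, b⟫ = ⟪a, Q θ b⟫)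
    (hQpos : ∀ (θ : ℝ) (v : V), v ≠ 0 → 0 < ⟪Q θ v, v⟫)
    (ζ ξ Dζ Dξ : ℝ → V)
    (hζ : ∀ θ : ℝ, HasDerivAt ζ (Dζ θ) θ) (hξ : ∀ θ : ℝ, HasDerivAt ξ (Dξ θ) θ)
    (hζper : ∀ θ : ℝ, ζ (θ + 2 * π) = ζ θ) (hξper : ∀ θ : ℝ, ξ (θ + 2 * π) = ξ θ)
    (heq1 : ∀ θ : ℝ, Dζ θ + B η₀ (ζ θ) + ξ θ = 0)
    (heq2 : ∀ θ : ℝ, Dξ θ + B η₀ (ξ θ) + Q θ (ζ θ) = 0) :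
    ∀ θ : ℝ, ζ θ = 0 ∧ ξ θ = 0 := by
  set f : ℝ → ℝ := fun θ => ⟪ζ θ, ξ θ⟫ with hf
  set g : ℝ → ℝ := fun θ => -(‖ξ θ‖ ^ 2 + ⟪Q θ (ζ θ), ζ θ⟫) with hg
  have hDζ : ∀ θ, Dζ θ = -B η₀ (ζ θ) - ξ θ := by
    intro θ
    have := heq1 θ
    linear_combination (norm := abel) this
  have hDξ : ∀ θ, Dξ θ = -B η₀ (ξ θ) - Q θ (ζ θ) := by
    intro θ
    have := heq2 θ
    linear_combination (norm := abel) this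
  have hfd : ∀ θ, HasDerivAt f (g θ) θ := by
    intro θ
    have h := (hζ θ).inner ℝ (hξ θ)
    have hval : ⟪ζ θ, Dξ θ⟫ + ⟪Dζ θ, ξ θ⟫ = g θ := by
      rw [hDζ θ, hDξ θ]
      have h1 : ⟪ζ θ, -B η₀ (ξ θ) - Q θ (ζ θ)⟫
          = -⟪ζ θ, B η₀ (ξ θ)⟫ - ⟪ζ θ, Q θ (ζ θ)⟫ := by
        rw [inner_sub_right, inner_neg_right]
      have h2 : ⟪(-B η₀ (ζ θ) - ξ θ : V), ξ θ⟫
          = -⟪B η₀ (ζ θ), ξ θ⟫ - ⟪ξ θ, ξ θ⟫ := by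
        rw [inner_sub_left, inner_neg_left]
      rw [h1, h2]
      have hs := hskew (ζ θ) (ξ θ)
      have hn : ⟪ξ θ, ξ θ⟫ = (‖ξ θ‖ : ℝ) ^ 2 := real_inner_self_eq_norm_sq (ξ θ)
      have hc : ⟪ζ θ, Q θ (ζ θ)⟫ = ⟪Q θ (ζ θ), ζ θ⟫ := real_inner_comm _ _
      simp only [hg]
      linarith
    rw [hval] at h
    exact h
  have hgle : ∀ θ, g θ ≤ 0 := by
    intro θ
    have h1 : (0 : ℝ) ≤ ‖ξ θ‖ ^ 2 := sq_nonneg _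
    have h2 : (0 : ℝ) ≤ ⟪Q θ (ζ θ), ζ θ⟫ := by
      by_cases hz : ζ θ = 0
      · simp [hz]
      · exact (hQpos θ (ζ θ) hz).le
    simp only [hg]
    linarith
  have hfper : ∀ θ, f (θ + 2 * π) = f θ := by
    intro θ; simp only [hf, hζper θ, hξper θ]
  have hant : Antitone f := by
    refine antitone_of_deriv_nonpos (fun θ => (hfd θ).differentiableAt) (fun θ => ?_)
    rw [(hfd θ).deriv]; exact hgle θ
  -- f is constant on any interval of length 2π between periodic points
  have hkey : ∀ a b : ℝ, a ≤ b → b ≤ a + 2 * π → f b = f a := by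
    intro a b hab hba
    have h1 : f b ≤ f a := hant hab
    have h2 : f a ≤ f b := by
      have := hant hba
      rwa [hfper a] at this
    linarith
  have hgzero : ∀ θ, g θ = 0 := by
    intro θ
    have hconst : f =ᶠ[nhds θ] fun _ => f (θ - π) := by
      have hmem : Set.Ioo (θ - π) (θ + π) ∈ nhds θ := by
        refine Ioo_mem_nhds ?_ ?_ <;> nlinarith [pi_pos]
      filter_upwards [hmem] with s hs
      exact hkey (θ - π) s hs.1.le (by have := hs.2.le; linarith)
    have h0 : HasDerivAt f (0 : ℝ) θ :=
      (hasDerivAt_const θ (f (θ - π))).congr_of_eventuallyEq hconst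
    exact (hfd θ).unique h0
  intro θ
  have h := hgzero θ
  simp only [hg] at h
  have h1 : (0 : ℝ) ≤ ‖ξ θ‖ ^ 2 := sq_nonneg _
  have hz : ζ θ = 0 := by
    by_contra hc
    have := hQpos θ (ζ θ) hc
    linarith
  have h2 : (0 : ℝ) ≤ ⟪Q θ (ζ θ), ζ θ⟫ := by simp [hz]
  refine ⟨hz, ?_⟩
  rw [hz] at h; simpa using h
end
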